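/- arXiv:2406.11113 — 2 statements merged into one kernel-verified Lean document; each statement's English description precedes it below -/
import Mathlib

section
/- Let S and T be nonempty finite sets of positive integers, let s1 = min S and d = gcd of all elements of S ∪ T, and let d⁺ = gcd of all sums s+t with s ∈ S, t ∈ T. Then for any integer coefficients a_s (s ∈ S) and b_t (t ∈ T), the number Σ_{s∈S} a_s·s − Σ_{t∈T} b_t·t is congruent to (Σ_{s∈S} a_s + Σ_{t∈T} b_t)·s1 modulo d⁺. -/
/-- gcd of all sums `s + t` with `s ∈ S`, `t ∈ T`. -/
def sumGcd (S T : Finset ℕ) : ℕ := (S ×ˢ T).gcd (fun p => p.1 + p.2)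

/-- gcd of all elements of `S ∪ T`. -/
def unionGcd (S T : Finset ℕ) : ℕ := (S ∪ T).gcd id

/-- Arc of the Toeplitz digraph `D(T_n⟨S;T⟩)` on vertex set `{1,…,n}`. -/
def arc (n : ℕ) (S T : Finset ℕ) (u v : ℕ) : Prop :=
  u ∈ Finset.Icc 1 n ∧ v ∈ Finset.Icc 1 n ∧
    ((∃ s ∈ S, (v : ℤ) - u = s) ∨ (∃ t ∈ T, (u : ℤ) - v = t))

/-- There is a directed walk of length `m` from `u` to `v` in `D(T_n⟨S;T⟩)`. -/
def hasWalk (n : ℕ) (S T : Finset ℕ) (u v m : ℕ) : Prop :=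
  ∃ f : ℕ → ℕ, f 0 = u ∧ f m = v ∧ ∀ i < m, arc n S T (f i) (f (i + 1))

/-- `ℓ ∈ P_i(A)` for `A = T_n⟨S;T⟩`, where `dplus = gcd(S+T)` and `s1 = min S`. -/
def Pset (n dplus s1 : ℕ) (i : ℕ) (ℓ : ℤ) : Prop :=
  -(n : ℤ) < ℓ ∧ ℓ < n ∧ ℓ ≡ (i : ℤ) * s1 [ZMOD (dplus : ℤ)]

/-- `ℓ ∈ Q_i(A)` for `A = T_n⟨S;T⟩`. -/
def Qset (n : ℕ) (S T : Finset ℕ) (i : ℕ) (ℓ : ℤ) : Prop :=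
  -(n : ℤ) < ℓ ∧ ℓ < n ∧ ∃ a b : ℕ → ℕ,
    ((∑ s ∈ S, (a s : ℤ) * s) - ∑ t ∈ T, (b t : ℤ) * t) = ℓ ∧
    ((∑ s ∈ S, a s) + ∑ t ∈ T, b t) = i

/-- `ℓ ∈ R_i(A)` for `A = T_n⟨S;T⟩`. -/
def Rset (n : ℕ) (S T : Finset ℕ) (i : ℕ) (ℓ : ℤ) : Prop :=
  -(n : ℤ) < ℓ ∧ ℓ < n ∧ ∀ u ∈ Finset.Icc 1 n, ∀ v ∈ Finset.Icc 1 n,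
    (v : ℤ) - u = ℓ → hasWalk n S T u v i

/-- `T_n⟨S;T⟩` is walk-ensured (with `s1 = min S`). -/
def walkEnsured (n : ℕ) (S T : Finset ℕ) (s1 : ℕ) : Prop :=
  ∃ M : ℕ, 0 < M ∧ ∀ u ∈ Finset.Icc 1 n, ∀ v ∈ Finset.Icc 1 n, ∀ ℓ : ℕ, M ≤ ℓ →
    ((v : ℤ) - u ≡ (ℓ : ℤ) * s1 [ZMOD ((sumGcd S T : ℕ) : ℤ)]) → hasWalk n S T u v ℓ

theorem Int.modEq_neg_of_dvd_add {d x y : ℤ} (h : d ∣ x + y) : x ≡ -y [ZMOD d] :=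
  Int.modEq_iff_dvd.2 (by simpa [sub_eq_add_neg, add_comm] using h.neg_right)

theorem Int.modEq_of_dvd_add_of_dvd_add {d x y z : ℤ} (hx : d ∣ x + z) (hy : d ∣ y + z) :
    x ≡ y [ZMOD d] :=
  (Int.modEq_neg_of_dvd_add hx).trans (Int.modEq_neg_of_dvd_add hy).symm

theorem sumGcd_dvd_add {S T : Finset ℕ} {s t : ℕ} (hs : s ∈ S) (ht : t ∈ T) :
    ((sumGcd S T : ℕ) : ℤ) ∣ (s : ℤ) + t := by
  exact_mod_cast Finset.gcd_dvd (s := S ×ˢ T) (f := fun p : ℕ × ℕ => p.1 + p.2) (b := (s, t))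
    (Finset.mem_product.2 ⟨hs, ht⟩)

/-- Modulo a common divisor of all `s + t`, every `s ∈ S` is `≡ s₀` and every `t ∈ T` is `≡ -s₀`. -/
theorem sum_sub_sum_modEq_of_dvd_add {S T : Finset ℕ} {d : ℤ}
    (hd : ∀ s ∈ S, ∀ t ∈ T, d ∣ (s : ℤ) + t) {s₀ t₀ : ℕ} (hs₀ : s₀ ∈ S) (ht₀ : t₀ ∈ T)
    (a b : ℕ → ℤ) :
    ((∑ s ∈ S, a s * s) - ∑ t ∈ T, b t * t) ≡
      ((∑ s ∈ S, a s) + ∑ t ∈ T, b t) * s₀ [ZMOD d] := by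
  have hS : ∀ s ∈ S, a s * s ≡ a s * s₀ [ZMOD d] := fun s hs =>
    (Int.modEq_of_dvd_add_of_dvd_add (hd s hs t₀ ht₀) (hd s₀ hs₀ t₀ ht₀)).mul_left _
  have hT : ∀ t ∈ T, b t * t ≡ b t * -s₀ [ZMOD d] := fun t ht =>
    (Int.modEq_neg_of_dvd_add (by rw [add_comm]; exact hd s₀ hs₀ t ht)).mul_left _
  calc ((∑ s ∈ S, a s * s) - ∑ t ∈ T, b t * t)
      ≡ (∑ s ∈ S, a s * s₀) - ∑ t ∈ T, b t * -s₀ [ZMOD d] :=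
        (Int.ModEq.sum hS).sub (Int.ModEq.sum hT)
    _ = ((∑ s ∈ S, a s) + ∑ t ∈ T, b t) * s₀ := by
        simp only [Finset.sum_mul, mul_neg, Finset.sum_neg_distrib, sub_neg_eq_add, add_mul]

theorem stmt0_general (S T : Finset ℕ) (hS : S.Nonempty) (hT : T.Nonempty)
    (a b : ℕ → ℤ) :
    ((∑ s ∈ S, a s * s) - ∑ t ∈ T, b t * t) ≡
      ((∑ s ∈ S, a s) + ∑ t ∈ T, b t) * (S.min' hS : ℤ) [ZMOD ((sumGcd S T : ℕ) : ℤ)] := by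
  obtain ⟨t₀, ht₀⟩ := hT
  exact sum_sub_sum_modEq_of_dvd_add (fun _ hs _ ht => sumGcd_dvd_add hs ht)
    (S.min'_mem hS) ht₀ a b

theorem stmt0 (S T : Finset ℕ) (hS : S.Nonempty) (hT : T.Nonempty)
    (hSpos : ∀ s ∈ S, 0 < s) (hTpos : ∀ t ∈ T, 0 < t)
    (a b : ℕ → ℤ) :
    ((∑ s ∈ S, a s * s) - ∑ t ∈ T, b t * t) ≡
      ((∑ s ∈ S, a s) + ∑ t ∈ T, b t) * (S.min' hS : ℤ) [ZMOD ((sumGcd S T : ℕ) : ℤ)] :=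
  stmt0_general S T hS hT a b
end

section
/- Let D be the digraph of a walk-ensured Toeplitz matrix T_n⟨S; T⟩ and let d = gcd(S ∪ T). If u ≡ v (mod d) for vertices u, v ∈ {1,…,n}, then there exists a directed walk from u to v in D. -/
theorem Int.exists_ge_modEq_mul_of_gcd_dvd {m s : ℕ} (hm : 0 < m) {w : ℤ}
    (hw : (Nat.gcd m s : ℤ) ∣ w) (M : ℕ) : ∃ ℓ : ℕ, M ≤ ℓ ∧ w ≡ ℓ * s [ZMOD m] := by
  obtain ⟨k, rfl⟩ := hw
  set x := k * Nat.gcdB m s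
  have hx : 0 ≤ x % m := Int.emod_nonneg x (by exact_mod_cast hm.ne')
  refine ⟨(x % m).toNat + M * m, by nlinarith,
    Int.modEq_iff_dvd.mpr ⟨M * s - x / m * s - k * Nat.gcdA m s, ?_⟩⟩
  push_cast [Int.toNat_of_nonneg hx]
  rw [Nat.gcd_eq_gcd_ab, Int.emod_def]
  ring

theorem dvd_sumGcd_iff {S T : Finset ℕ} {a : ℕ} :
    a ∣ sumGcd S T ↔ ∀ s ∈ S, ∀ t ∈ T, a ∣ s + t := by
  simp only [sumGcd, Finset.dvd_gcd_iff, Finset.mem_product, Prod.forall, and_imp]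
  exact ⟨fun h s hs t ht => h s t hs ht, fun h s t hs ht => h s hs t ht⟩

theorem dvd_unionGcd_iff {S T : Finset ℕ} {a : ℕ} :
    a ∣ unionGcd S T ↔ (∀ s ∈ S, a ∣ s) ∧ ∀ t ∈ T, a ∣ t := by
  simp [unionGcd, Finset.dvd_gcd_iff, or_imp, forall_and]

theorem sumGcd_pos {S T : Finset ℕ} {s t : ℕ} (hs : s ∈ S) (ht : t ∈ T) (hst : 0 < s + t) :
    0 < sumGcd S T :=
  Nat.pos_of_dvd_of_pos (dvd_sumGcd_iff.mp dvd_rfl s hs t ht) hst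

theorem gcd_sumGcd_eq_unionGcd {S T : Finset ℕ} {s₁ : ℕ} (hs₁ : s₁ ∈ S) (hT : T.Nonempty) :
    Nat.gcd (sumGcd S T) s₁ = unionGcd S T := by
  set g := Nat.gcd (sumGcd S T) s₁
  have hsum : ∀ s ∈ S, ∀ t ∈ T, g ∣ s + t := dvd_sumGcd_iff.mp (Nat.gcd_dvd_left _ _)
  have hgT : ∀ t ∈ T, g ∣ t := fun t ht =>
    (Nat.dvd_add_right (Nat.gcd_dvd_right _ _)).mp (hsum s₁ hs₁ t ht)
  obtain ⟨t₀, ht₀⟩ := hT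
  have hgS : ∀ s ∈ S, g ∣ s := fun s hs =>
    (Nat.dvd_add_left (hgT t₀ ht₀)).mp (hsum s hs t₀ ht₀)
  obtain ⟨hdS, hdT⟩ := dvd_unionGcd_iff.mp (dvd_refl (unionGcd S T))
  exact Nat.dvd_antisymm (dvd_unionGcd_iff.mpr ⟨hgS, hgT⟩) <| Nat.dvd_gcd
    (dvd_sumGcd_iff.mpr fun s hs t ht => dvd_add (hdS s hs) (hdT t ht)) (hdS s₁ hs₁)

theorem stmt13_general (n : ℕ) (S T : Finset ℕ) (hS : S.Nonempty) (hT : T.Nonempty)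
    (hSsub : S ⊆ Finset.Icc 1 (n - 1))
    (hwe : walkEnsured n S T (S.min' hS))
    (u v : ℕ) (hu : u ∈ Finset.Icc 1 n) (hv : v ∈ Finset.Icc 1 n)
    (huv : u ≡ v [MOD unionGcd S T]) :
    ∃ m : ℕ, 0 < m ∧ hasWalk n S T u v m := by
  obtain ⟨M, hM, hwalk⟩ := hwe
  have hs₁ := S.min'_mem hS
  obtain ⟨t, ht⟩ := hT
  have hpos : 0 < sumGcd S T :=
    sumGcd_pos hs₁ ht (by have := (Finset.mem_Icc.mp (hSsub hs₁)).1; omega)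
  have hgcd : (Nat.gcd (sumGcd S T) (S.min' hS) : ℤ) ∣ (v : ℤ) - u := by
    rw [gcd_sumGcd_eq_unionGcd hs₁ ⟨t, ht⟩]
    exact Nat.modEq_iff_dvd.mp huv
  obtain ⟨ℓ, hℓ, hmod⟩ := Int.exists_ge_modEq_mul_of_gcd_dvd hpos hgcd M
  exact ⟨ℓ, hM.trans_le hℓ, hwalk u hu v hv ℓ hℓ hmod⟩

theorem stmt13 (n : ℕ) (S T : Finset ℕ) (hS : S.Nonempty) (hT : T.Nonempty)
    (hSsub : S ⊆ Finset.Icc 1 (n - 1)) (hTsub : T ⊆ Finset.Icc 1 (n - 1))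
    (hwe : walkEnsured n S T (S.min' hS))
    (u v : ℕ) (hu : u ∈ Finset.Icc 1 n) (hv : v ∈ Finset.Icc 1 n)
    (huv : u ≡ v [MOD unionGcd S T]) :
    ∃ m : ℕ, 0 < m ∧ hasWalk n S T u v m :=
  stmt13_general n S T hS hT hSsub hwe u v hu hv huv
end
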